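/- Every orderly semigroup is a Ramsey orderly algebra: let L be the first-order language with a single binary function symbol f, and let 𝒜 be an orderly L-algebra satisfying 𝒜(f (f t₁ t₂) t₃) = 𝒜(f t₁ (f t₂ t₃)) for all orderly terms t₁ < t₂ < t₃. Then for every reduction ℬ of 𝒜 and every X ⊆ ‖𝒜‖ there exists a reduction 𝒞 of ℬ that is homogeneous for X. -/

import Mathlib

open Function Set

universe u v w

/-- Terms of a purely functional first-order language whose function symbols
of arity `n` form the type `F n`, with variables indexed by `ℕ`. -/
inductive Tm (F : ℕ → Type u) : Type u
  | var : ℕ → Tm F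
  | func : {n : ℕ} → F n → (Fin n → Tm F) → Tm F

namespace Tm

variable {F : ℕ → Type u} {A : Type v} {β : Type w}

/-- The list of (indices of) variables occurring in a term, from left to right. -/
def varList : Tm F → List ℕ
  | .var i => [i]
  | .func (n := n) _ ts => (List.finRange n).flatMap fun i => (ts i).varList

/-- A term is *orderly* if the indices of the variables occurring in it,
read from left to right, are strictly increasing. -/
def Orderly (t : Tm F) : Prop := t.varList.Chain' (· < ·)

/-- `TermLT s t` iff the index of the last variable of `s` is less than the
index of the first variable of `t`. -/
def TermLT (s t : Tm F) : Prop :=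
  ∃ i j, s.varList.getLast? = some i ∧ t.varList.head? = some j ∧ i < j

/-- An infinite sequence of orderly terms is *admissible* iff it is increasing
with respect to `TermLT`. -/
def Admissible (ts : ℕ → Tm F) : Prop :=
  (∀ i, (ts i).Orderly) ∧ ∀ i, TermLT (ts i) (ts (i + 1))

/-- `s.subst σ` replaces each variable `vᵢ` in `s` by `σ i`. -/
def subst (σ : ℕ → Tm F) : Tm F → Tm F
  | .var i => σ i
  | .func f ts => .func f fun i => (ts i).subst σ

/-- Interpretation of a term in a structure with underlying set `A` whose
interpretation of the function symbols is `I`, under the assignment `a`. -/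
def realize (I : ∀ n, F n → (Fin n → A) → A) (a : ℕ → A) : Tm F → A
  | .var i => a i
  | .func (n := n) f ts => I n f fun i => (ts i).realize I a

end Tm

section General

variable {F : ℕ → Type u} {A : Type v} {β : Type w}

/-- `b` is a reduction of `a` (with respect to the algebra `(A, I)`). -/
def SeqReduction (I : ∀ n, F n → (Fin n → A) → A) (b a : ℕ → A) : Prop :=
  ∃ ts : ℕ → Tm F, Tm.Admissible ts ∧ ∀ i, b i = (ts i).realize I a

/-- The set of finite reductions of `a`. -/
def FR (I : ∀ n, F n → (Fin n → A) → A) (a : ℕ → A) : Set A :=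
  { x | ∃ t : Tm F, t.Orderly ∧ x = t.realize I a }

/-- `(A, I)` is a Ramsey algebra. -/
def RamseyAlg (I : ∀ n, F n → (Fin n → A) → A) : Prop :=
  ∀ (a : ℕ → A) (X : Set A),
    ∃ b, SeqReduction I b a ∧ (FR I b ⊆ X ∨ FR I b ∩ X = ∅)

/-- `(A, I)` is Ramsey below `a`. -/
def RamseyBelow (I : ∀ n, F n → (Fin n → A) → A) (a : ℕ → A) : Prop :=
  ∀ b, SeqReduction I b a → ∀ X : Set A,
    ∃ c, SeqReduction I c b ∧ (FR I c ⊆ X ∨ FR I c ∩ X = ∅)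

/-- An increasing tuple `t₁ < t₂ < ⋯ < tₙ` of orderly terms. -/
def OrdTuple {n : ℕ} (t : Fin n → Tm F) : Prop :=
  (∀ i, (t i).Orderly) ∧ ∀ i j : Fin n, i < j → Tm.TermLT (t i) (t j)

/-- `𝒜` (as a function on orderly terms) is an orderly algebra. -/
def IsOrderlyAlg (𝒜 : Tm F → β) : Prop :=
  ∀ (n : ℕ) (f : F n) (t t' : Fin n → Tm F), OrdTuple t → OrdTuple t' →
    (∀ k, 𝒜 (t k) = 𝒜 (t' k)) → 𝒜 (.func f t) = 𝒜 (.func f t')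

/-- The universe of an orderly algebra: its range on orderly terms. -/
def OAUniv (𝒜 : Tm F → β) : Set β := 𝒜 '' { t | t.Orderly }

/-- `ℬ` is a reduction of the orderly algebra `𝒜` (as functions on orderly terms). -/
def OAReduction (ℬ 𝒜 : Tm F → β) : Prop :=
  ∃ ts : ℕ → Tm F, Tm.Admissible ts ∧ ∀ s : Tm F, s.Orderly → ℬ s = 𝒜 (s.subst ts)

/-- `ℬ` is homogeneous for `X`. -/
def Homog (ℬ : Tm F → β) (X : Set β) : Prop :=
  OAUniv ℬ ⊆ X ∨ OAUniv ℬ ∩ X = ∅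

/-- An orderly algebra is weakly Ramsey. -/
def WeaklyRamseyOA (𝒜 : Tm F → β) : Prop :=
  ∀ X ⊆ OAUniv 𝒜, ∃ ℬ, OAReduction ℬ 𝒜 ∧ Homog ℬ X

/-- An orderly algebra is Ramsey. -/
def RamseyOA (𝒜 : Tm F → β) : Prop :=
  ∀ ℬ, OAReduction ℬ 𝒜 → ∀ X ⊆ OAUniv 𝒜, ∃ 𝒞, OAReduction 𝒞 ℬ ∧ Homog 𝒞 X

/-- The orderly algebra induced from the algebra `(A, I)` by the sequence `a`. -/
def inducedOA (I : ∀ n, F n → (Fin n → A) → A) (a : ℕ → A) : Tm F → A :=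
  fun t => t.realize I a

/-- `[FR(c)]ⁿ_<` : increasing `n`-tuples of finite reductions of `c`. -/
def FRtuple (I : ∀ n, F n → (Fin n → A) → A) (n : ℕ) (c : ℕ → A) : Set (Fin n → A) :=
  { x | ∃ t : Fin n → Tm F, OrdTuple t ∧ ∀ i, x i = (t i).realize I c }

/-- `‖𝒞‖ⁿ_<` for an orderly algebra `𝒞`. -/
def OATuple (n : ℕ) (𝒞 : Tm F → β) : Set (Fin n → β) :=
  { x | ∃ t : Fin n → Tm F, OrdTuple t ∧ ∀ i, x i = 𝒞 (t i) }

/-- The basic set `[n, a]` of the preorder with approximations `(ᵂA, ≤)`. -/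
def Approx (I : ∀ n, F n → (Fin n → A) → A) (n : ℕ) (a : ℕ → A) : Set (ℕ → A) :=
  { b | SeqReduction I b a ∧ ∀ i < n, b i = a i }

/-- The natural topology on `ᵂA`, generated by the sets `[n, a]`. -/
def natTop (I : ∀ n, F n → (Fin n → A) → A) : TopologicalSpace (ℕ → A) :=
  TopologicalSpace.generateFrom { S | ∃ n a, S = Approx I n a }

/-- A subset `X ⊆ ᵂA` is Ramsey. -/
def RamseySet (I : ∀ n, F n → (Fin n → A) → A) (X : Set (ℕ → A)) : Prop :=
  ∀ (n : ℕ) (a : ℕ → A), ∃ b ∈ Approx I n a,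
    Approx I n b ⊆ X ∨ Approx I n b ∩ X = ∅

/-- `X` has the property of Baire in the natural topology:
its symmetric difference with some open set is meager. -/
def HasBaireProperty (I : ∀ n, F n → (Fin n → A) → A) (X : Set (ℕ → A)) : Prop :=
  ∃ U : Set (ℕ → A), @IsOpen _ (natTop I) U ∧ @IsMeagre _ (natTop I) (symmDiff X U)

end General

/-- The language with a single binary function symbol. -/
inductive BinF : ℕ → Type
  | f : BinF 2

/-- Application of the binary function symbol: the term `f s t`. -/
def fapp (s t : Tm BinF) : Tm BinF := .func BinF.f ![s, t]

/-- The interpretation of the single binary function symbol by a binary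
operation `g` on `A`. -/
def binI {A : Type v} (g : A → A → A) : ∀ n, BinF n → (Fin n → A) → A
  | _, BinF.f, args => g (args 0) (args 1)

/-- The pair `(tˣ, tʸ)`: `(vᵢˣ, vᵢʸ) = (v_{2i}, v_{2i+1})` and
`((f s t)ˣ, (f s t)ʸ) = (f sˣ sʸ, f tˣ tʸ)`. -/
def xyPair : Tm BinF → Tm BinF × Tm BinF
  | .var i => (.var (2 * i), .var (2 * i + 1))
  | .func BinF.f ts =>
      (fapp (xyPair (ts 0)).1 (xyPair (ts 0)).2, fapp (xyPair (ts 1)).1 (xyPair (ts 1)).2)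

/-- The orderly algebra `♯𝒜`, `♯𝒜(t) = (𝒜(tˣ), 𝒜(tʸ))`. -/
def sharpOA {β : Type w} (𝒜 : Tm BinF → β) : Tm BinF → β × β :=
  fun t => (𝒜 (xyPair t).1, 𝒜 (xyPair t).2)

/-!
By associativity, the value of an orderly semigroup at an orderly term depends only on the
list of variables of the term, and this survives passing to a reduction. Colour a nonempty
increasing list `L` of indices by whether the right-nested product of the variables in `L` lands
in `X`. Hindman's theorem in the free monoid on `ℕ`, applied to the finite products of the
generators, gives ordered blocks `w₀ < w₁ < ⋯` all of whose ordered concatenations have the same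
colour; substituting for `vᵢ` the right-nested product of the variables in `wᵢ` then yields a
homogeneous reduction.
-/

namespace Tm

variable {F : ℕ → Type u} {s t : Tm F}

theorem orderly_iff_pairwise : s.Orderly ↔ s.varList.Pairwise (· < ·) :=
  List.isChain_iff_pairwise

theorem termLT_iff : TermLT s t ↔ s.varList ≠ [] ∧ t.varList ≠ [] ∧
    ∀ x ∈ s.varList.getLast?, ∀ y ∈ t.varList.head?, x < y := by
  constructor
  · rintro ⟨i, j, hi, hj, hij⟩
    refine ⟨fun h => by simp [h] at hi, fun h => by simp [h] at hj, ?_⟩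
    simp_all
  · rintro ⟨hs, ht, h⟩
    have hi := List.getLast?_eq_some_getLast hs
    have hj := List.head?_eq_some_head ht
    exact ⟨_, _, hi, hj, h _ hi _ hj⟩

theorem termLT_iff_pairwise_append (hs : s.Orderly) (ht : t.Orderly) :
    TermLT s t ↔ s.varList ≠ [] ∧ t.varList ≠ [] ∧ (s.varList ++ t.varList).Pairwise (· < ·) := by
  rw [termLT_iff, ← List.isChain_iff_pairwise, List.isChain_append]
  exact ⟨fun ⟨h₁, h₂, h⟩ => ⟨h₁, h₂, hs, ht, h⟩, fun ⟨h₁, h₂, _, _, h⟩ => ⟨h₁, h₂, h⟩⟩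

theorem varList_subst (σ : ℕ → Tm F) (s : Tm F) :
    (s.subst σ).varList = s.varList.flatMap fun i => (σ i).varList := by
  induction s with
  | var i => simp [subst, varList]
  | func f ts ih => simp [subst, varList, ih, List.flatMap_assoc]

namespace Admissible

variable {σ : ℕ → Tm F} (hσ : Admissible σ)
include hσ

theorem varList_ne_nil (i : ℕ) : (σ i).varList ≠ [] :=
  (termLT_iff.1 (hσ.2 i)).1

theorem lt_of_mem_of_mem_succ {i x y : ℕ} (hx : x ∈ (σ i).varList)
    (hy : y ∈ (σ (i + 1)).varList) : x < y :=
  (List.pairwise_append.1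
    ((termLT_iff_pairwise_append (hσ.1 i) (hσ.1 (i + 1))).1 (hσ.2 i)).2.2).2.2 x hx y hy

theorem lt_of_mem_of_mem {i j x y : ℕ} (hij : i < j) (hx : x ∈ (σ i).varList)
    (hy : y ∈ (σ j).varList) : x < y := by
  induction j, hij using Nat.le_induction generalizing y with
  | base => exact hσ.lt_of_mem_of_mem_succ hx hy
  | succ j _ ih =>
    obtain ⟨z, hz⟩ := List.exists_mem_of_ne_nil _ (hσ.varList_ne_nil j)
    exact (ih hz).trans (hσ.lt_of_mem_of_mem_succ hz hy)

end Admissible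

theorem Orderly.subst {σ : ℕ → Tm F} (hs : s.Orderly) (hσ : Admissible σ) :
    (s.subst σ).Orderly := by
  rw [orderly_iff_pairwise, varList_subst, List.pairwise_flatMap]
  exact ⟨fun i _ => orderly_iff_pairwise.1 (hσ.1 i),
    (orderly_iff_pairwise.1 hs).imp fun hij _ hx _ hy => hσ.lt_of_mem_of_mem hij hx hy⟩

end Tm

open Tm

def VarListInvariant {F : ℕ → Type u} {β : Type w} (𝒜 : Tm F → β) : Prop :=
  ∀ ⦃s t : Tm F⦄, s.Orderly → t.Orderly → s.varList = t.varList → 𝒜 s = 𝒜 t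

theorem VarListInvariant.of_oaReduction {F : ℕ → Type u} {β : Type w} {𝒜 ℬ : Tm F → β}
    (h𝒜 : VarListInvariant 𝒜) (hℬ : OAReduction ℬ 𝒜) : VarListInvariant ℬ := by
  obtain ⟨σ, hσ, hℬ⟩ := hℬ
  intro s t hs ht hst
  rw [hℬ s hs, hℬ t ht]
  exact h𝒜 (hs.subst hσ) (ht.subst hσ) (by rw [varList_subst, varList_subst, hst])

section Binary

variable {β : Type w} {s t s' t' : Tm BinF}

theorem varList_fapp (s t : Tm BinF) : (fapp s t).varList = s.varList ++ t.varList := by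
  simp [fapp, varList, List.finRange_succ]

theorem func_eq_fapp (u : Fin 2 → Tm BinF) : Tm.func BinF.f u = fapp (u 0) (u 1) := by
  rw [fapp]
  congr
  ext i
  fin_cases i <;> rfl

theorem Tm.varList_ne_nil_of_binF : ∀ t : Tm BinF, t.varList ≠ []
  | .var _ => by simp [varList]
  | .func BinF.f u => by
    rw [func_eq_fapp, varList_fapp]
    exact List.append_ne_nil_of_left_ne_nil (varList_ne_nil_of_binF (u 0)) _

theorem orderly_fapp_iff : (fapp s t).Orderly ↔ s.Orderly ∧ t.Orderly ∧ TermLT s t := by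
  rw [orderly_iff_pairwise, varList_fapp]
  constructor
  · intro h
    have hs : s.Orderly := orderly_iff_pairwise.2 (List.pairwise_append.1 h).1
    have ht : t.Orderly := orderly_iff_pairwise.2 (List.pairwise_append.1 h).2.1
    exact ⟨hs, ht, (termLT_iff_pairwise_append hs ht).2
      ⟨varList_ne_nil_of_binF s, varList_ne_nil_of_binF t, h⟩⟩
  · rintro ⟨hs, ht, hst⟩
    exact ((termLT_iff_pairwise_append hs ht).1 hst).2.2

theorem ordTuple_pair_iff : OrdTuple ![s, t] ↔ (fapp s t).Orderly := by
  rw [orderly_fapp_iff, OrdTuple, Fin.forall_fin_two]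
  constructor
  · rintro ⟨⟨hs, ht⟩, hst⟩
    exact ⟨hs, ht, hst 0 1 Fin.zero_lt_one⟩
  · rintro ⟨hs, ht, hst⟩
    refine ⟨⟨hs, ht⟩, ?_⟩
    simp [Fin.forall_fin_two, hst]

theorem IsOrderlyAlg.fapp_congr {𝒜 : Tm BinF → β} (h𝒜 : IsOrderlyAlg 𝒜)
    (h : (fapp s t).Orderly) (h' : (fapp s' t').Orderly) (hs : 𝒜 s = 𝒜 s')
    (ht : 𝒜 t = 𝒜 t') : 𝒜 (fapp s t) = 𝒜 (fapp s' t') :=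
  h𝒜 2 BinF.f _ _ (ordTuple_pair_iff.2 h) (ordTuple_pair_iff.2 h') (Fin.forall_fin_two.2 ⟨hs, ht⟩)

def IsOrderlySemigroup (𝒜 : Tm BinF → β) : Prop :=
  IsOrderlyAlg 𝒜 ∧ ∀ t₁ t₂ t₃ : Tm BinF, t₁.Orderly → t₂.Orderly → t₃.Orderly →
    TermLT t₁ t₂ → TermLT t₂ t₃ → 𝒜 (fapp (fapp t₁ t₂) t₃) = 𝒜 (fapp t₁ (fapp t₂ t₃))

theorem IsOrderlySemigroup.assoc {𝒜 : Tm BinF → β} (h𝒜 : IsOrderlySemigroup 𝒜)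
    {t₁ t₂ t₃ : Tm BinF} (h : (fapp (fapp t₁ t₂) t₃).Orderly) :
    𝒜 (fapp (fapp t₁ t₂) t₃) = 𝒜 (fapp t₁ (fapp t₂ t₃)) := by
  obtain ⟨h₁₂, h₃, -⟩ := orderly_fapp_iff.1 h
  obtain ⟨h₁, h₂, hlt₁₂⟩ := orderly_fapp_iff.1 h₁₂
  have h₂₃ : (fapp t₂ t₃).Orderly := by
    simp only [orderly_iff_pairwise, varList_fapp, List.append_assoc] at h ⊢
    exact (List.pairwise_append.1 h).2.1
  exact h𝒜.2 _ _ _ h₁ h₂ h₃ hlt₁₂ (orderly_fapp_iff.1 h₂₃).2.2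

def rightNested : List ℕ → Tm BinF
  | [] => .var 0
  | [i] => .var i
  | i :: j :: L => fapp (.var i) (rightNested (j :: L))

theorem rightNested_cons (i : ℕ) {L : List ℕ} (hL : L ≠ []) :
    rightNested (i :: L) = fapp (.var i) (rightNested L) := by
  obtain ⟨j, L, rfl⟩ := List.exists_cons_of_ne_nil hL
  rfl

theorem varList_rightNested : ∀ {L : List ℕ}, L ≠ [] → (rightNested L).varList = L
  | [i], _ => rfl
  | i :: j :: L, _ => by
    rw [rightNested_cons i (List.cons_ne_nil j L), varList_fapp,
      varList_rightNested (List.cons_ne_nil j L)]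
    rfl

namespace IsOrderlySemigroup

variable {𝒜 : Tm BinF → β} (h𝒜 : IsOrderlySemigroup 𝒜)
include h𝒜

theorem fapp_rightNested {L₁ L₂ : List ℕ} (h₁ : L₁ ≠ []) (h₂ : L₂ ≠ [])
    (h : (L₁ ++ L₂).Pairwise (· < ·)) :
    𝒜 (fapp (rightNested L₁) (rightNested L₂)) = 𝒜 (rightNested (L₁ ++ L₂)) := by
  induction L₁ with
  | nil => contradiction
  | cons i L₁ ih =>
    rcases eq_or_ne L₁ [] with rfl | hL₁
    · rw [List.singleton_append, rightNested_cons i h₂]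
      rfl
    have hL : L₁ ++ L₂ ≠ [] := List.append_ne_nil_of_left_ne_nil hL₁ _
    have hv : (Tm.var i : Tm BinF).varList = [i] := rfl
    rw [List.cons_append, rightNested_cons i hL₁, rightNested_cons i hL]
    calc 𝒜 (fapp (fapp (.var i) (rightNested L₁)) (rightNested L₂))
        = 𝒜 (fapp (.var i) (fapp (rightNested L₁) (rightNested L₂))) := by
          apply h𝒜.assoc
          simpa [orderly_iff_pairwise, varList_fapp, varList_rightNested, hL₁, h₂, hv] using h
      _ = 𝒜 (fapp (.var i) (rightNested (L₁ ++ L₂))) := by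
          apply h𝒜.1.fapp_congr _ _ rfl (ih hL₁ (List.pairwise_cons.1 h).2)
          · simpa [orderly_iff_pairwise, varList_fapp, varList_rightNested, hL₁, h₂, hv] using h
          · simpa [orderly_iff_pairwise, varList_fapp, varList_rightNested, hL, hv] using h

theorem apply_eq_rightNested {s : Tm BinF} (hs : s.Orderly) :
    𝒜 s = 𝒜 (rightNested s.varList) := by
  induction s with
  | var i => rfl
  | func c u ih =>
    cases c
    rw [func_eq_fapp] at hs ⊢
    obtain ⟨h₀, h₁, -⟩ := orderly_fapp_iff.1 hs
    have hvar (t : Tm BinF) := varList_rightNested (varList_ne_nil_of_binF t)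
    have hpair := orderly_iff_pairwise.1 hs
    rw [varList_fapp] at hpair ⊢
    rw [← h𝒜.fapp_rightNested (varList_ne_nil_of_binF _) (varList_ne_nil_of_binF _) hpair]
    refine h𝒜.1.fapp_congr hs ?_ (ih 0 h₀) (ih 1 h₁)
    rwa [orderly_iff_pairwise, varList_fapp, hvar, hvar]

theorem varListInvariant : VarListInvariant 𝒜 := fun s t hs ht hst => by
  rw [h𝒜.apply_eq_rightNested hs, h𝒜.apply_eq_rightNested ht, hst]

end IsOrderlySemigroup

theorem VarListInvariant.apply_eq_rightNested {𝒜 : Tm BinF → β} (h𝒜 : VarListInvariant 𝒜)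
    {s : Tm BinF} (hs : s.Orderly) : 𝒜 s = 𝒜 (rightNested s.varList) := by
  have hvar := varList_rightNested (varList_ne_nil_of_binF s)
  exact h𝒜 hs (by rwa [orderly_iff_pairwise, hvar, ← orderly_iff_pairwise]) hvar.symm

end Binary

namespace Hindman

variable {M : Type*}

theorem exists_FP_subset_or_subset_compl [Semigroup M] (a : Stream' M) (S : Set M) :
    ∃ b : Stream' M, FP b ⊆ FP a ∧ (FP b ⊆ S ∨ FP b ⊆ Sᶜ) := by
  obtain ⟨c, hc, b, hb⟩ := FP_partition_regular a {FP a ∩ S, FP a \ S} (toFinite _)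
    (by rw [sUnion_pair, inter_union_sdiff])
  rcases hc with rfl | rfl
  · exact ⟨b, hb.trans inter_subset_left, Or.inl (hb.trans inter_subset_right)⟩
  · exact ⟨b, hb.trans sdiff_subset, Or.inr (hb.trans fun _ hm => hm.2)⟩

theorem prod_map_mem_FP_drop [Monoid M] (a : Stream' M) {i : ℕ} {L : List ℕ}
    (h : (i :: L).Pairwise (· < ·)) : ((i :: L).map a.get).prod ∈ FP (a.drop i) := by
  induction L generalizing i with
  | nil => simpa [Stream'.head_drop] using FP.head (a.drop i)
  | cons j L ih =>
    obtain ⟨d, rfl⟩ := Nat.exists_eq_add_of_lt (List.rel_of_pairwise_cons h List.mem_cons_self)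
    rw [List.map_cons, List.prod_cons, ← Stream'.head_drop]
    apply FP.cons
    rw [Stream'.tail_eq_drop, Stream'.drop_drop]
    refine FP_drop_subset_FP _ d ?_
    rw [Stream'.drop_drop, show i + 1 + d = i + d + 1 by omega]
    exact ih (List.pairwise_cons.1 h).2

theorem mem_FP_iff_exists_prod [Monoid M] {a : Stream' M} {m : M} :
    m ∈ FP a ↔ ∃ L : List ℕ, L ≠ [] ∧ L.Pairwise (· < ·) ∧ (L.map a.get).prod = m := by
  constructor
  · intro hm
    induction hm with
    | head' a => exact ⟨[0], by simp, by simp, by simp [Stream'.head]⟩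
    | tail' a m _ ih =>
      obtain ⟨L, hne, hL, rfl⟩ := ih
      refine ⟨L.map (· + 1), by simpa, List.pairwise_map.2 (hL.imp (by omega)), ?_⟩
      rw [List.map_map]
      rfl
    | cons' a m _ ih =>
      obtain ⟨L, hne, hL, rfl⟩ := ih
      refine ⟨0 :: L.map (· + 1), by simp, ?_, ?_⟩
      · simpa [List.pairwise_map] using hL.imp (by omega)
      · rw [List.map_cons, List.map_map, List.prod_cons]
        rfl
  · rintro ⟨_ | ⟨i, L⟩, hne, hL, rfl⟩
    · contradiction
    · exact FP_drop_subset_FP a i (prod_map_mem_FP_drop a hL)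

end Hindman

open Hindman

theorem FreeMonoid.toList_prod_map_of_nats (L : List ℕ) :
    FreeMonoid.toList (L.map (Stream'.nats.map FreeMonoid.of).get).prod = L := by
  induction L <;> simp_all [Stream'.get_map, Stream'.get_nats]

theorem FreeMonoid.mem_FP_map_of_nats_iff {m : FreeMonoid ℕ} :
    m ∈ FP (Stream'.nats.map FreeMonoid.of) ↔ m.toList ≠ [] ∧ m.toList.Pairwise (· < ·) := by
  rw [mem_FP_iff_exists_prod]
  constructor
  · rintro ⟨L, hne, hL, rfl⟩
    rw [toList_prod_map_of_nats]
    exact ⟨hne, hL⟩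
  · intro h
    refine ⟨m.toList, h.1, h.2, ?_⟩
    rw [← toList.injective.eq_iff, toList_prod_map_of_nats]

/-- Each `w i` is nonempty and increasing, and `w i` lies entirely below `w j` for `i < j`. -/
def OrderedBlocks (w : ℕ → List ℕ) : Prop :=
  (∀ i, w i ≠ []) ∧ ∀ L : List ℕ, L.Pairwise (· < ·) → (L.flatMap w).Pairwise (· < ·)

theorem exists_orderedBlocks_homogeneous (S : Set (List ℕ)) :
    ∃ w, OrderedBlocks w ∧
      ((∀ L : List ℕ, L ≠ [] → L.Pairwise (· < ·) → L.flatMap w ∈ S) ∨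
        ∀ L : List ℕ, L ≠ [] → L.Pairwise (· < ·) → L.flatMap w ∉ S) := by
  obtain ⟨b, hb, hS⟩ := exists_FP_subset_or_subset_compl (Stream'.nats.map FreeMonoid.of)
    (FreeMonoid.toList ⁻¹' S)
  set w := fun i => (b.get i).toList
  have hprod (L : List ℕ) : FreeMonoid.toList (L.map b.get).prod = L.flatMap w := by
    simp [FreeMonoid.toList_prod, List.flatMap, w, Function.comp_def]
  have hmem {L : List ℕ} (hne : L ≠ []) (hL : L.Pairwise (· < ·)) : (L.map b.get).prod ∈ FP b :=
    mem_FP_iff_exists_prod.2 ⟨L, hne, hL, rfl⟩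
  have hblock {L : List ℕ} (hne : L ≠ []) (hL : L.Pairwise (· < ·)) :
      L.flatMap w ≠ [] ∧ (L.flatMap w).Pairwise (· < ·) := by
    rw [← hprod]
    exact FreeMonoid.mem_FP_map_of_nats_iff.1 (hb (hmem hne hL))
  refine ⟨w, ⟨fun i => by simpa using (hblock (L := [i]) (by simp) (by simp)).1,
    fun L hL => ?_⟩, ?_⟩
  · rcases eq_or_ne L [] with rfl | hne
    · simp
    · exact (hblock hne hL).2
  · refine hS.imp (fun h L hne hL => ?_) (fun h L hne hL => ?_) <;>
    · rw [← hprod]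
      exact h (hmem hne hL)

namespace OrderedBlocks

variable {w : ℕ → List ℕ} (hw : OrderedBlocks w)
include hw

theorem varList_subst_rightNested (s : Tm BinF) :
    (s.subst (rightNested ∘ w)).varList = s.varList.flatMap w := by
  simp only [varList_subst, Function.comp_apply, varList_rightNested (hw.1 _)]

theorem admissible_rightNested : Admissible (rightNested ∘ w) := by
  have hvar (i : ℕ) : (rightNested (w i)).varList = w i := varList_rightNested (hw.1 i)
  have horderly (i : ℕ) : ((rightNested ∘ w) i).Orderly := by
    simpa [orderly_iff_pairwise, hvar] using hw.2 [i] (by simp)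
  refine ⟨horderly, fun i => (termLT_iff_pairwise_append (horderly i) (horderly (i + 1))).2 ?_⟩
  simpa [hvar, hw.1] using hw.2 [i, i + 1] (by simp)

end OrderedBlocks

/-- Every orderly semigroup is a Ramsey orderly algebra: for
every reduction `ℬ` of `𝒜` and every `X ⊆ ‖𝒜‖` some reduction of `ℬ` is
homogeneous for `X`. -/
theorem orderly_semigroup_is_ramsey {β : Type w} (𝒜 : Tm BinF → β)
    (h𝒜 : IsOrderlyAlg 𝒜)
    (hassoc : ∀ t₁ t₂ t₃ : Tm BinF, t₁.Orderly → t₂.Orderly → t₃.Orderly →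
      Tm.TermLT t₁ t₂ → Tm.TermLT t₂ t₃ →
      𝒜 (fapp (fapp t₁ t₂) t₃) = 𝒜 (fapp t₁ (fapp t₂ t₃))) :
    RamseyOA 𝒜 := by
  intro ℬ hℬ X _
  have hinv : VarListInvariant ℬ :=
    (IsOrderlySemigroup.varListInvariant ⟨h𝒜, hassoc⟩).of_oaReduction hℬ
  obtain ⟨w, hw, hhom⟩ := exists_orderedBlocks_homogeneous {L | ℬ (rightNested L) ∈ X}
  have hσ := hw.admissible_rightNested
  have hvalue {s : Tm BinF} (hs : s.Orderly) :
      ℬ (s.subst (rightNested ∘ w)) = ℬ (rightNested (s.varList.flatMap w)) := by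
    rw [hinv.apply_eq_rightNested (hs.subst hσ), hw.varList_subst_rightNested]
  refine ⟨fun s => ℬ (s.subst (rightNested ∘ w)), ⟨_, hσ, fun _ _ => rfl⟩, ?_⟩
  rcases hhom with hin | hout
  · left
    rintro _ ⟨s, hs, rfl⟩
    show ℬ _ ∈ X
    rw [hvalue hs]
    exact hin _ (varList_ne_nil_of_binF s) (orderly_iff_pairwise.1 hs)
  · right
    rw [eq_empty_iff_forall_notMem]
    rintro _ ⟨⟨s, hs, rfl⟩, hX⟩
    refine hout _ (varList_ne_nil_of_binF s) (orderly_iff_pairwise.1 hs) ?_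
    show ℬ _ ∈ X
    rw [← hvalue hs]
    exact hX
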